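/- Let P : ℂ → ℂ be a monic polynomial of degree D ≥ 2, with filled Julia set K_P and Green's function G. Fix z₀ ∈ K_P, and for each s > 0 let V_s denote the connected component of the open set {z ∈ ℂ : G(z) < s} containing z₀. Then the family {V_s}_{s>0} is properly nested: the closure of V_s is contained in V_{s'} whenever 0 < s < s', and the intersection ⋂_{s>0} V_s equals the connected component of K_P containing z₀. -/

import Mathlib

/-!
Write `h = log⁺ ‖·‖`. Since `P` is monic of degree `D`, `h ∘ P - D • h` is bounded by some
`C`, so the sequence `h (P^[n] z) / D ^ n` converges uniformly, at geometric speed, to `G`.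
Hence `G` is continuous, `G ∘ P = D • G`, and `|G - h| ≤ C / (D - 1)`. The last two facts show
that `G` vanishes exactly on `K_P` and that its sublevel sets are bounded.

The closure of `V_s` is a connected set containing `z₀` on which `G ≤ s < s'`, so it lies in
`V_{s'}`. The closures of the `V_s` are compact, connected and directed downwards, so their
intersection, which is `⋂ V_s`, is a connected subset of `{G = 0} = K_P` containing `z₀`.
-/

open Filter Topology Set Bornology Real

def IsGreenFunction {X : Type*} (f : X → X) (h : X → ℝ) (D : ℝ) (G : X → ℝ) : Prop :=
  ∀ x, Tendsto (fun n : ℕ => h (f^[n] x) / D ^ n) atTop (𝓝 (G x))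

namespace IsGreenFunction

variable {X : Type*} {f : X → X} {h : X → ℝ} {D C : ℝ} {G : X → ℝ}

theorem map_apply (hG : IsGreenFunction f h D G) (hD : D ≠ 0) (x : X) :
    G (f x) = D * G x := by
  refine tendsto_nhds_unique (hG (f x))
    ((((hG x).comp (tendsto_add_atTop_nat 1)).const_mul D).congr fun n => ?_)
  simp only [Function.comp_apply, Function.iterate_succ_apply, pow_succ]
  field_simp

theorem iterate_map_apply (hG : IsGreenFunction f h D G) (hD : D ≠ 0) (n : ℕ) (x : X) :
    G (f^[n] x) = D ^ n * G x := by
  induction n generalizing x with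
  | zero => simp
  | succ n ih => rw [Function.iterate_succ_apply, ih, hG.map_apply hD, pow_succ, mul_assoc]

section Estimates

variable (hG : IsGreenFunction f h D G) (hD : 1 < D) (hfh : ∀ x, |h (f x) - D * h x| ≤ C)
include hG hD hfh

theorem abs_sub_le (x : X) (n : ℕ) : |h (f^[n] x) / D ^ n - G x| ≤ C / (D - 1) / D ^ n := by
  have hD0 : 0 < D := by linarith
  have step : ∀ n, dist (h (f^[n] x) / D ^ n) (h (f^[n + 1] x) / D ^ (n + 1)) ≤
      C / D * D⁻¹ ^ n := fun n => by
    have hdiff : h (f^[n + 1] x) / D ^ (n + 1) - h (f^[n] x) / D ^ n =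
        (h (f (f^[n] x)) - D * h (f^[n] x)) / D ^ (n + 1) := by
      rw [Function.iterate_succ_apply']; field_simp; ring
    rw [Real.dist_eq, abs_sub_comm, hdiff, abs_div, abs_of_pos (pow_pos hD0 _)]
    calc |h (f (f^[n] x)) - D * h (f^[n] x)| / D ^ (n + 1) ≤ C / D ^ (n + 1) := by
          gcongr; exact hfh _
      _ = C / D * D⁻¹ ^ n := by rw [inv_pow, pow_succ]; field_simp
  have hgeom := dist_le_of_le_geometric_of_tendsto (D⁻¹) (C / D) (inv_lt_one_of_one_lt₀ hD) step
    (hG x) n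
  rw [Real.dist_eq] at hgeom
  convert hgeom using 1
  rw [inv_pow]
  field_simp

theorem sub_le (x : X) : h x - C / (D - 1) ≤ G x := by
  have := hG.abs_sub_le hD hfh x 0
  simp only [Function.iterate_zero_apply, pow_zero, div_one] at this
  linarith [le_abs_self (h x - G x)]

theorem pos_of_lt {x : X} {n : ℕ} (hx : C / (D - 1) < h (f^[n] x)) : 0 < G x := by
  have hpos : 0 < G (f^[n] x) := by linarith [hG.sub_le hD hfh (f^[n] x)]
  rw [hG.iterate_map_apply (by positivity) n x] at hpos
  exact pos_of_mul_pos_right hpos (by positivity)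

theorem continuous [TopologicalSpace X] (hf : Continuous f) (hh : Continuous h) :
    Continuous G := by
  refine TendstoUniformly.continuous (p := atTop) (F := fun n x => h (f^[n] x) / D ^ n) ?_
    (Frequently.of_forall fun n => (hh.comp (hf.iterate n)).div_const _)
  rw [Metric.tendstoUniformly_iff]
  intro ε hε
  have hlim : Tendsto (fun n : ℕ => C / (D - 1) / D ^ n) atTop (𝓝 0) :=
    tendsto_const_nhds.div_atTop (tendsto_pow_atTop_atTop_of_one_lt hD)
  filter_upwards [hlim.eventually (gt_mem_nhds hε)] with n hn x
  rw [dist_comm, Real.dist_eq]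
  exact (hG.abs_sub_le hD hfh x n).trans_lt hn

end Estimates

theorem eq_zero_of_abs_le (hG : IsGreenFunction f h D G) (hD : 1 < D) {x : X} {B : ℝ}
    (hB : ∀ n, |h (f^[n] x)| ≤ B) : G x = 0 := by
  refine tendsto_nhds_unique (hG x) (squeeze_zero_norm (a := fun n => B / D ^ n) (fun n => ?_)
    (tendsto_const_nhds.div_atTop (tendsto_pow_atTop_atTop_of_one_lt hD)))
  rw [Real.norm_eq_abs, abs_div, abs_of_pos (pow_pos (zero_lt_one.trans hD) n)]
  exact div_le_div_of_nonneg_right (hB n) (pow_nonneg (zero_le_one.trans hD.le) n)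

section Norm

variable {E : Type*} [SeminormedAddCommGroup E] {f : E → E} {G : E → ℝ}
  (hG : IsGreenFunction f (fun x => log⁺ ‖x‖) D G) (hD : 1 < D)
  (hfh : ∀ x, |log⁺ ‖f x‖ - D * log⁺ ‖x‖| ≤ C)
include hG hD hfh

theorem setOf_isBounded_orbit_eq :
    {x | IsBounded (range fun n => f^[n] x)} = {x | G x ≤ 0} := by
  ext x
  refine ⟨fun hx => ?_, fun hx => ?_⟩
  · obtain ⟨B, hB⟩ := isBounded_iff_forall_norm_le.1 hx
    refine (hG.eq_zero_of_abs_le hD (B := log⁺ B) fun n => ?_).le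
    rw [abs_of_nonneg posLog_nonneg]
    exact posLog_le_posLog (norm_nonneg _) (hB _ (mem_range_self n))
  · by_contra hunb
    rw [mem_ofPred_eq, isBounded_iff_forall_norm_le] at hunb
    push Not at hunb
    obtain ⟨_, ⟨n, rfl⟩, hn⟩ := hunb (exp (C / (D - 1)))
    have hlog : C / (D - 1) < log⁺ ‖f^[n] x‖ :=
      ((lt_log_iff_exp_lt ((exp_pos _).trans hn)).2 hn).trans_le (le_max_right _ _)
    exact (hG.pos_of_lt hD hfh hlog).not_ge hx

theorem isBounded_sublevel (s : ℝ) : IsBounded {x | G x < s} := by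
  refine (Metric.isBounded_closedBall (x := 0) (r := exp (s + C / (D - 1)))).subset
    fun x hx => ?_
  have hlog : log⁺ ‖x‖ ≤ s + C / (D - 1) := by
    linarith [hG.sub_le hD hfh x, (show G x < s from hx)]
  rw [posLog_eq_log_max_one (norm_nonneg _), log_le_iff_le_exp (by positivity)] at hlog
  exact mem_closedBall_zero_iff.2 ((le_max_right _ _).trans hlog)

end Norm

end IsGreenFunction

theorem abs_posLog_sub_posLog_le_log_two {a b : ℝ} (ha : 0 ≤ a) (hb : 0 ≤ b) (hab : a ≤ 2 * b)
    (hba : b ≤ 2 * a) : |log⁺ a - log⁺ b| ≤ log 2 := by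
  have key : ∀ {a b : ℝ}, 0 ≤ a → a ≤ 2 * b → log⁺ a ≤ log 2 + log⁺ b := fun ha hab =>
    (posLog_le_posLog ha hab).trans <| by
      simpa [posLog_eq_log (by norm_num : (1 : ℝ) ≤ |2|)] using posLog_mul (x := 2)
  rw [abs_sub_le_iff]
  constructor <;> linarith [key ha hab, key hb hba]

theorem Polynomial.Monic.exists_abs_posLog_norm_eval_sub_le {𝕜 : Type*} [NormedField 𝕜]
    [ProperSpace 𝕜] {P : Polynomial 𝕜} (hP : P.Monic) :
    ∃ C, ∀ z, |log⁺ ‖P.eval z‖ - P.natDegree * log⁺ ‖z‖| ≤ C := by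
  set u : 𝕜 → ℝ := fun z => max |log⁺ ‖P.eval z‖ - P.natDegree * log⁺ ‖z‖| (log 2)
  have hu : Continuous u := by
    have := P.continuous (R := 𝕜)
    fun_prop
  have hfar : ∀ᶠ z in cocompact 𝕜, u z ≤ u 0 := by
    rw [← Metric.cobounded_eq_cocompact]
    filter_upwards [(isEquivalent_cobounded_leading_monomial (P := P)).isLittleO.def (c := 1 / 2)
      (by norm_num)] with z hz
    simp only [hP.leadingCoeff, one_mul, Pi.sub_apply] at hz
    refine (max_le ?_ le_rfl).trans (le_max_right _ _)
    rw [← posLog_pow, ← norm_pow]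
    apply abs_posLog_sub_posLog_le_log_two (norm_nonneg _) (norm_nonneg _) <;>
      linarith [norm_sub_norm_le (P.eval z) (z ^ P.natDegree),
        norm_sub_norm_le (z ^ P.natDegree) (P.eval z), norm_sub_rev (P.eval z) (z ^ P.natDegree)]
  obtain ⟨z₀, hz₀⟩ := hu.exists_forall_ge' 0 hfar
  exact ⟨u z₀, fun z => (le_max_left _ _).trans (hz₀ z)⟩

section Connectedness

variable {X : Type*} [TopologicalSpace X]

theorem isPreconnected_iInter_of_directed [T2Space X] {ι : Type*} [Nonempty ι] {t : ι → Set X}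
    (hd : Directed (· ⊇ ·) t) (hc : ∀ i, IsCompact (t i)) (hp : ∀ i, IsPreconnected (t i)) :
    IsPreconnected (⋂ i, t i) := by
  rw [isPreconnected_iff_subset_of_fully_disjoint_closed
    (isClosed_iInter fun i => (hc i).isClosed)]
  intro a b ha hb hab hdisj
  obtain ⟨i₀⟩ := ‹Nonempty ι›
  have hsub₀ : ⋂ i, t i ⊆ t i₀ := iInter_subset t i₀
  obtain ⟨u, v, hu, hv, hau, hbv, huv⟩ : SeparatedNhds (a ∩ t i₀) (b ∩ t i₀) :=
    .of_isCompact_isCompact ((hc i₀).inter_left ha) ((hc i₀).inter_left hb)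
      (hdisj.mono inter_subset_left inter_subset_left)
  obtain ⟨j, hj⟩ : ∃ j, t j ⊆ u ∪ v := by
    have hcover : (t i₀ \ (u ∪ v)) ∩ ⋂ i, t i = ∅ := by
      refine eq_empty_of_forall_notMem fun x ⟨⟨_, hxuv⟩, hx⟩ => hxuv ?_
      rcases hab hx with hxa | hxb
      exacts [.inl (hau ⟨hxa, hsub₀ hx⟩), .inr (hbv ⟨hxb, hsub₀ hx⟩)]
    obtain ⟨i, hi⟩ := ((hc i₀).diff (hu.union hv)).elim_directed_family_closed t
      (fun i => (hc i).isClosed) hcover hd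
    obtain ⟨j, hji₀, hji⟩ := hd i₀ i
    exact ⟨j, fun x hx => by_contra fun hxuv =>
      (eq_empty_iff_forall_notMem.1 hi) x ⟨⟨hji₀ hx, hxuv⟩, hji hx⟩⟩
  rcases (hp j).subset_or_subset hu hv huv hj with hju | hjv
  · exact .inl fun x hx => (hab hx).resolve_right fun hxb =>
      disjoint_left.1 huv (hju (mem_iInter.1 hx j)) (hbv ⟨hxb, hsub₀ hx⟩)
  · exact .inr fun x hx => (hab hx).resolve_left fun hxa =>
      disjoint_left.1 huv (hau ⟨hxa, hsub₀ hx⟩) (hjv (mem_iInter.1 hx j))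

variable {G : X → ℝ}

theorem closure_connectedComponentIn_sublevel_subset (hG : Continuous G) {s s' : ℝ}
    (hss' : s < s') (x : X) :
    closure (connectedComponentIn {y | G y < s} x) ⊆ connectedComponentIn {y | G y < s'} x := by
  by_cases hx : G x < s
  · refine isPreconnected_connectedComponentIn.closure.subset_connectedComponentIn
      (subset_closure (mem_connectedComponentIn hx)) fun y hy => ?_
    have hys : G y ≤ s := closure_lt_subset_le hG continuous_const
      (closure_mono (connectedComponentIn_subset _ _) hy)
    exact hys.trans_lt hss'
  · simp [connectedComponentIn_eq_empty (show x ∉ {y | G y < s} from hx)]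

theorem biInter_connectedComponentIn_sublevel_eq [T2Space X] (hG : Continuous G)
    (hc : ∀ s, IsCompact (closure {y | G y < s})) {c : ℝ} {x : X} (hx : G x ≤ c) :
    ⋂ s ∈ Ioi c, connectedComponentIn {y | G y < s} x = connectedComponentIn {y | G y ≤ c} x := by
  set K : Ioi c → Set X := fun s => closure (connectedComponentIn {y | G y < s} x)
  have hK : IsPreconnected (⋂ s, K s) := by
    have : Nonempty (Ioi c) := ⟨⟨c + 1, by simp⟩⟩
    refine isPreconnected_iInter_of_directed ?_ (fun s => ?_) fun s =>
      isPreconnected_connectedComponentIn.closure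
    · exact Monotone.directed_ge fun s s' hss' => closure_mono <|
        connectedComponentIn_mono _ fun y (hy : G y < s) => hy.trans_le hss'
    · exact (hc s).of_isClosed_subset isClosed_closure
        (closure_mono (connectedComponentIn_subset _ _))
  have hKc : ⋂ s, K s ⊆ {y | G y ≤ c} := fun y hy =>
    le_of_forall_gt_imp_ge_of_dense fun s hs => closure_lt_subset_le hG continuous_const
      (closure_mono (connectedComponentIn_subset _ _) (mem_iInter.1 hy ⟨s, hs⟩))
  refine Subset.antisymm (fun y hy => ?_) fun y hy => mem_iInter₂.2 fun s hs =>
    connectedComponentIn_mono _ (fun z (hz : G z ≤ c) => hz.trans_lt hs) hy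
  refine hK.subset_connectedComponentIn (mem_iInter.2 fun s => ?_) hKc
    (mem_iInter.2 fun s => subset_closure (mem_iInter₂.1 hy s s.2))
  exact subset_closure (mem_connectedComponentIn (lt_of_le_of_lt hx s.2))

end Connectedness

/-- For `z₀` in the filled Julia set, the components `V_s` of `{G < s}`
containing `z₀` are properly nested, and their intersection is the connected component
of the filled Julia set containing `z₀`. -/
theorem nested_sublevel_components (D : ℕ) (hD : 2 ≤ D)
    (P : Polynomial ℂ) (hmonic : P.Monic) (hdeg : P.natDegree = D) (G : ℂ → ℝ)
    (hG : ∀ z : ℂ, Tendsto (fun n : ℕ =>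
        (1 / (D : ℝ) ^ n) *
          max (Real.log ‖(fun w => P.eval w)^[n] z‖) 0)
      atTop (𝓝 (G z)))
    (z₀ : ℂ)
    (hz₀ : Bornology.IsBounded (Set.range fun n : ℕ => (fun w => P.eval w)^[n] z₀)) :
    (∀ s s' : ℝ, 0 < s → s < s' →
      closure (connectedComponentIn {z : ℂ | G z < s} z₀) ⊆
        connectedComponentIn {z : ℂ | G z < s'} z₀) ∧
    (⋂ s ∈ Set.Ioi (0 : ℝ), connectedComponentIn {z : ℂ | G z < s} z₀) =
      connectedComponentIn
        {z : ℂ | Bornology.IsBounded (Set.range fun n : ℕ => (fun w => P.eval w)^[n] z)}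
        z₀ := by
  have hD1 : (1 : ℝ) < D := by exact_mod_cast hD
  have hGreen : IsGreenFunction (fun w => P.eval w) (fun z => log⁺ ‖z‖) D G := fun z => by
    simpa only [one_div_mul_eq_div, posLog_apply, max_comm] using hG z
  obtain ⟨C, hC⟩ := hmonic.exists_abs_posLog_norm_eval_sub_le
  rw [hdeg] at hC
  have hGc : Continuous G := hGreen.continuous hD1 hC P.continuous (by fun_prop)
  have hK := hGreen.setOf_isBounded_orbit_eq hD1 hC
  refine ⟨fun s s' _ hss' => closure_connectedComponentIn_sublevel_subset hGc hss' z₀, ?_⟩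
  rw [hK]
  exact biInter_connectedComponentIn_sublevel_eq hGc
    (fun s => (hGreen.isBounded_sublevel hD1 hC s).isCompact_closure)
    (show z₀ ∈ {z | G z ≤ 0} from hK ▸ hz₀)
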